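/- arXiv:1907.05448 — 4 statements merged into one kernel-verified Lean document; each statement's English description precedes it below -/
import Mathlib

section
/- (Main analysis result.) Let 0 < m ≤ L, σ ∈ [0,1), ρ ≥ 0, and define M₀ := [[−2mL, L+m],[L+m, −2]] and M₁ := [[σ²−1, 1],[1, −1]]. Consider an algorithm of the form (alg) whose matrices satisfy the fixed-point conditions (i)–(ii). Suppose the gradient maps g_1,…,g_n satisfy the sector bound with parameters (m,L) and optimizer y_opt, and the Laplacian sequence {L^k} satisfies the graph assumptions with parameter σ. Let Ψ be a matrix whose columns form a basis of the nullspace of [F_x F_u]. Suppose there exist symmetric matrices P ≻ 0, Q ≻ 0 (ν×ν) and R ⪰ 0 (c×c) such that: (LMI-1) Ψᵀ N₁ᵀ · blockdiag(P, −ρ²P, M₀) · N₁ Ψ ⪯ 0, where N₁ stacks the rows [A B_u], [I 0], [C_y D_{yu}], [0 1]; and (LMI-2) N₂ᵀ · blockdiag(Q, −ρ²Q, M₀, M₁⊗R) · N₂ ⪯ 0, where N₂ stacks the rows [A B_u B_v], [I 0 0], [C_y D_{yu} D_{yv}], [0 1 0], [C_z D_{zu} D_{zv}], [0 0 I_c].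 Then for every trajectory of the algorithm there exist a fixed point (x*ᵢ, y*ᵢ, z*ᵢ, u*ᵢ, v*ᵢ) satisfying the fixed-point conditions (consensus, optimality, robustness) with y*ᵢ = y_opt, and a constant C > 0 independent of i and k, such that ‖x_i^k − x*ᵢ‖ ≤ C·ρ^k for all agents i ∈ {1,…,n} and all k ≥ 0. -/
/-!
Write `x̄` for the mean of the agents' states and `x̃ᵢ = xᵢ − x̄` for the deviations. Because `p`
spans an equilibrium direction and `q` absorbs the input, `x*ᵢ = α p − gᵢ(y_opt) q` with
`α = y_opt / C_y p` is a fixed point with `v* = 0`. The errors relative to it obey the same linear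
equations. The columns of `L^k` sum to zero, so the mean error does not see the graph and stays
in the nullspace of `[F_x F_u]`. LMI-1 then bounds its `P`-energy. LMI-2 bounds the `Q`-energy of
each deviation. Summed over the agents, the `M₀`-terms are nonnegative by the sector bound. The
`M₁ ⊗ R`-terms are nonnegative because `I − Π − L^k` contracts the zero-mean deviations by `σ`.
Hence `V = n x̄ᵀ P x̄ + Σᵢ x̃ᵢᵀ Q x̃ᵢ` satisfies `V_{k+1} ≤ ρ² V_k`, and `P, Q ≻ 0` turn this into
`‖x_i^k − x*ᵢ‖ = O(ρ^k)`.
-/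

open Matrix BigOperators

/-- The Euclidean norm of a vector. -/
noncomputable def enorm2 {ι : Type*} [Fintype ι] (v : ι → ℝ) : ℝ :=
  Real.sqrt (∑ i, v i ^ 2)

/-- The projection matrix `Π = (1/n) 1ₙ 1ₙᵀ` onto the span of the all-ones vector. -/
noncomputable def projOnes (n : ℕ) : Matrix (Fin n) (Fin n) ℝ :=
  Matrix.of fun _ _ => (n : ℝ)⁻¹

/-- The quadratic form `[y; u]ᵀ M₀ [y; u]` with `M₀ = [[−2mL, L+m],[L+m, −2]]`. -/
def quadM0 (m L y u : ℝ) : ℝ := -(2*m*L) * y^2 + 2*(L+m) * y * u - 2 * u^2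

open Finset

lemma enorm2_sq {ι : Type*} [Fintype ι] (v : ι → ℝ) : enorm2 v ^ 2 = v ⬝ᵥ v := by
  rw [enorm2, Real.sq_sqrt (sum_nonneg fun i _ => sq_nonneg (v i))]
  simp only [dotProduct, sq]

lemma dotProduct_add_self_le {ι : Type*} [Fintype ι] (a b : ι → ℝ) :
    (a + b) ⬝ᵥ (a + b) ≤ 2 * (a ⬝ᵥ a) + 2 * (b ⬝ᵥ b) := by
  have h := dotProduct_star_self_nonneg (a - b)
  simp only [star_trivial, add_dotProduct, dotProduct_add, sub_dotProduct, dotProduct_sub,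
    dotProduct_comm b a] at h ⊢
  linarith

lemma Matrix.PosDef.exists_pos_mul_dotProduct_self_le {ι : Type*} [Fintype ι] [DecidableEq ι]
    {P : Matrix ι ι ℝ} (hP : P.PosDef) : ∃ ε > 0, ∀ w : ι → ℝ, ε * (w ⬝ᵥ w) ≤ w ⬝ᵥ P *ᵥ w := by
  cases isEmpty_or_nonempty ι
  · exact ⟨1, one_pos, fun w => by simp [dotProduct]⟩
  open scoped MatrixOrder in
  obtain ⟨ε, hε, hle⟩ := (CFC.exists_pos_algebraMap_le_iff hP.isHermitian.isSelfAdjoint).2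
    fun x hx => hP.isStrictlyPositive.spectrum_pos hx
  refine ⟨ε, hε, fun w => ?_⟩
  have := (Matrix.le_iff.1 hle).dotProduct_mulVec_nonneg w
  rw [Algebra.algebraMap_eq_smul_one, sub_mulVec, dotProduct_sub, smul_mulVec, one_mulVec,
    dotProduct_smul, star_trivial, smul_eq_mul, sub_nonneg] at this
  exact this

lemma Matrix.PosSemidef.exists_eq_transpose_mul_self {κ : Type*} [Fintype κ] [DecidableEq κ]
    {R : Matrix κ κ ℝ} (hR : R.PosSemidef) : ∃ B : Matrix κ κ ℝ, R = Bᵀ * B := by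
  open scoped MatrixOrder in
  obtain ⟨B, hB⟩ := CStarAlgebra.nonneg_iff_eq_star_mul_self.mp hR.nonneg
  exact ⟨B, by rwa [star_eq_conjTranspose, conjTranspose_eq_transpose_of_trivial] at hB⟩

section Expect

variable {ι X Y : Type*} [Fintype ι]

lemma sum_sub_expect_eq_zero {M : Type*} [AddCommGroup M] [Module ℚ≥0 M] (x : ι → M) :
    ∑ i, (x i - 𝔼 j, x j) = 0 := by
  rw [sum_sub_distrib, sum_const, card_smul_expect, sub_self]

lemma expect_eq_zero_of_sum_eq_zero {M : Type*} [AddCommGroup M] [Module ℚ≥0 M] {x : ι → M}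
    (h : ∑ i, x i = 0) : 𝔼 i, x i = 0 := by
  rw [expect_univ, h, smul_zero]

lemma expect_smul_const (u : ι → ℝ) (b : X → ℝ) : 𝔼 i, u i • b = (𝔼 i, u i) • b :=
  (map_expect ((LinearMap.toSpanSingleton ℝ _ b).restrictScalars ℚ≥0) _ _).symm

variable [Fintype X]

lemma expect_mulVec (A : Matrix Y X ℝ) (x : ι → X → ℝ) : 𝔼 i, A *ᵥ x i = A *ᵥ 𝔼 i, x i :=
  (map_expect (A.mulVecLin.restrictScalars ℚ≥0) _ _).symm

lemma expect_dotProduct (w : X → ℝ) (x : ι → X → ℝ) : 𝔼 i, w ⬝ᵥ x i = w ⬝ᵥ 𝔼 i, x i :=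
  (map_expect ((dotProductBilin ℝ ℝ w).restrictScalars ℚ≥0) _ _).symm

variable {W : Type*} [Fintype W]

lemma expect_eq_mulVec_add_smul_add_mulVec {A : Matrix Y X ℝ} {b : Y → ℝ} {B : Matrix Y W ℝ}
    {x : ι → X → ℝ} {u : ι → ℝ} {v : ι → W → ℝ} {x' : ι → Y → ℝ}
    (h : ∀ i, x' i = A *ᵥ x i + u i • b + B *ᵥ v i) :
    𝔼 i, x' i = A *ᵥ (𝔼 i, x i) + (𝔼 i, u i) • b + B *ᵥ 𝔼 i, v i := by
  simp only [h, expect_add_distrib, expect_mulVec, expect_smul_const]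

lemma sub_expect_eq_mulVec_add_smul_add_mulVec {A : Matrix Y X ℝ} {b : Y → ℝ}
    {B : Matrix Y W ℝ} {x : ι → X → ℝ} {u : ι → ℝ} {v : ι → W → ℝ} {x' : ι → Y → ℝ}
    (h : ∀ i, x' i = A *ᵥ x i + u i • b + B *ᵥ v i) (i : ι) :
    x' i - 𝔼 j, x' j
      = A *ᵥ (x i - 𝔼 j, x j) + (u i - 𝔼 j, u j) • b + B *ᵥ (v i - 𝔼 j, v j) := by
  rw [h i, expect_eq_mulVec_add_smul_add_mulVec h, mulVec_sub, mulVec_sub, sub_smul]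
  abel

lemma expect_eq_dotProduct_add_mul_add_dotProduct {c : X → ℝ} {d : ℝ} {e : W → ℝ}
    {x : ι → X → ℝ} {u : ι → ℝ} {v : ι → W → ℝ} {y : ι → ℝ}
    (h : ∀ i, y i = c ⬝ᵥ x i + d * u i + e ⬝ᵥ v i) :
    𝔼 i, y i = c ⬝ᵥ (𝔼 i, x i) + d * (𝔼 i, u i) + e ⬝ᵥ 𝔼 i, v i := by
  simp only [h, expect_add_distrib, expect_dotProduct, mul_expect]

lemma sub_expect_eq_dotProduct_add_mul_add_dotProduct {c : X → ℝ} {d : ℝ} {e : W → ℝ}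
    {x : ι → X → ℝ} {u : ι → ℝ} {v : ι → W → ℝ} {y : ι → ℝ}
    (h : ∀ i, y i = c ⬝ᵥ x i + d * u i + e ⬝ᵥ v i) (i : ι) :
    y i - 𝔼 j, y j = c ⬝ᵥ (x i - 𝔼 j, x j) + d * (u i - 𝔼 j, u j) + e ⬝ᵥ (v i - 𝔼 j, v j) := by
  rw [h i, expect_eq_dotProduct_add_mul_add_dotProduct h, dotProduct_sub, dotProduct_sub]
  ring

end Expect

section Graph

variable {n : ℕ} {κ : Type*} [Fintype κ] {σ : ℝ} {Lap : Matrix (Fin n) (Fin n) ℝ}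

lemma projOnes_mulVec_eq_zero {φ : Fin n → ℝ} (h : ∑ i, φ i = 0) : projOnes n *ᵥ φ = 0 := by
  ext i
  simp [projOnes, mulVec, dotProduct, ← mul_sum, h]

lemma dotProduct_sub_mulVec_self_le
    (hL : ∀ φ, enorm2 ((1 - projOnes n - Lap) *ᵥ φ) ≤ σ * enorm2 φ)
    {φ : Fin n → ℝ} (hφ : ∑ i, φ i = 0) :
    (φ - Lap *ᵥ φ) ⬝ᵥ (φ - Lap *ᵥ φ) ≤ σ ^ 2 * (φ ⬝ᵥ φ) := by
  have h := hL φ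
  rw [sub_mulVec, sub_mulVec, one_mulVec, projOnes_mulVec_eq_zero hφ, sub_zero] at h
  rw [← enorm2_sq, ← enorm2_sq, ← mul_pow]
  exact pow_le_pow_left₀ (Real.sqrt_nonneg _) h 2

lemma sum_dotProduct_sub_sum_smul_le
    (hL : ∀ φ, enorm2 ((1 - projOnes n - Lap) *ᵥ φ) ≤ σ * enorm2 φ)
    (w : Fin n → κ → ℝ) (hw : ∑ i, w i = 0) :
    ∑ i, (w i - ∑ j, Lap i j • w j) ⬝ᵥ (w i - ∑ j, Lap i j • w j)
      ≤ σ ^ 2 * ∑ i, w i ⬝ᵥ w i := by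
  have hcol : ∀ l, ∑ i, w i l = 0 := fun l => by simpa using congrFun hw l
  have key := fun l => dotProduct_sub_mulVec_self_le hL (hcol l)
  calc ∑ i, (w i - ∑ j, Lap i j • w j) ⬝ᵥ (w i - ∑ j, Lap i j • w j)
      = ∑ l, ((fun i => w i l) - Lap *ᵥ fun i => w i l) ⬝ᵥ
          ((fun i => w i l) - Lap *ᵥ fun i => w i l) := by
        simp only [dotProduct, mulVec, Pi.sub_apply, Finset.sum_apply, Pi.smul_apply, smul_eq_mul]
        exact sum_comm
    _ ≤ ∑ l, σ ^ 2 * ((fun i => w i l) ⬝ᵥ fun i => w i l) := sum_le_sum fun l _ => key l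
    _ = σ ^ 2 * ∑ i, w i ⬝ᵥ w i := by
        simp only [← mul_sum, dotProduct]
        rw [sum_comm]

lemma sum_dotProduct_mulVec_sub_sum_smul_le [DecidableEq κ] {R : Matrix κ κ ℝ}
    (hR : R.PosSemidef)
    (hL : ∀ φ, enorm2 ((1 - projOnes n - Lap) *ᵥ φ) ≤ σ * enorm2 φ)
    (z : Fin n → κ → ℝ) (hz : ∑ i, z i = 0) :
    ∑ i, (z i - ∑ j, Lap i j • z j) ⬝ᵥ R *ᵥ (z i - ∑ j, Lap i j • z j)
      ≤ σ ^ 2 * ∑ i, z i ⬝ᵥ R *ᵥ z i := by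
  obtain ⟨B, rfl⟩ := hR.exists_eq_transpose_mul_self
  have hform : ∀ a, a ⬝ᵥ (Bᵀ * B) *ᵥ a = (B *ᵥ a) ⬝ᵥ (B *ᵥ a) := fun a => by
    rw [← mulVec_mulVec, dotProduct_mulVec, vecMul_transpose]
  have hBz : ∑ i, B *ᵥ z i = 0 := by rw [← mulVec_sum, hz, mulVec_zero]
  simp only [hform]
  simpa only [mulVec_sub, mulVec_sum, mulVec_smul] using
    sum_dotProduct_sub_sum_smul_le hL (fun i => B *ᵥ z i) hBz

end Graph

section QuadraticConstraints

lemma quadM0_nonneg_of_sector {m L y u : ℝ} (h : (u - m * y) * (u - L * y) ≤ 0) :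
    0 ≤ quadM0 m L y u := by
  have : quadM0 m L y u = -2 * ((u - m * y) * (u - L * y)) := by unfold quadM0; ring
  linarith

lemma sum_quadM0_eq {ι : Type*} [Fintype ι] (m L : ℝ) (y u : ι → ℝ) :
    ∑ i, quadM0 m L (y i) (u i) = Fintype.card ι * quadM0 m L (𝔼 i, y i) (𝔼 i, u i)
      + ∑ i, quadM0 m L (y i - 𝔼 j, y j) (u i - 𝔼 j, u j) := by
  have hy := sum_sub_expect_eq_zero y
  have hu := sum_sub_expect_eq_zero u
  set yb := 𝔼 i, y i
  set ub := 𝔼 i, u i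
  have h : ∀ i, quadM0 m L (y i) (u i) = quadM0 m L yb ub + quadM0 m L (y i - yb) (u i - ub)
      + ((2 * (L + m) * ub - 4 * m * L * yb) * (y i - yb)
        + (2 * (L + m) * yb - 4 * ub) * (u i - ub)) := fun i => by unfold quadM0; ring
  simp only [h, sum_add_distrib, sum_const, card_univ, nsmul_eq_mul, ← mul_sum,
    hy, hu, mul_zero, add_zero]

variable {κ : Type*} [Fintype κ]

/-- `[z; v]ᵀ (M₁ ⊗ R) [z; v]` with `M₁ = [[σ² − 1, 1], [1, −1]]`. -/
def quadM1 (σ : ℝ) (R : Matrix κ κ ℝ) (z v : κ → ℝ) : ℝ :=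
  (σ ^ 2 - 1) * (z ⬝ᵥ R *ᵥ z) + 2 * (z ⬝ᵥ R *ᵥ v) - v ⬝ᵥ R *ᵥ v

lemma quadM1_eq {R : Matrix κ κ ℝ} (hR : R.IsSymm) (σ : ℝ) (z v : κ → ℝ) :
    quadM1 σ R z v = σ ^ 2 * (z ⬝ᵥ R *ᵥ z) - (z - v) ⬝ᵥ R *ᵥ (z - v) := by
  have hvz : v ⬝ᵥ R *ᵥ z = z ⬝ᵥ R *ᵥ v := by
    rw [dotProduct_comm, ← vecMul_transpose, ← dotProduct_mulVec, hR.eq]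
  simp only [quadM1, mulVec_sub, dotProduct_sub, sub_dotProduct, hvz]
  ring

lemma sum_quadM1_nonneg [DecidableEq κ] {n : ℕ} {σ : ℝ} {Lap : Matrix (Fin n) (Fin n) ℝ}
    {R : Matrix κ κ ℝ} (hR : R.PosSemidef)
    (hL : ∀ φ, enorm2 ((1 - projOnes n - Lap) *ᵥ φ) ≤ σ * enorm2 φ)
    (z : Fin n → κ → ℝ) (hz : ∑ i, z i = 0) :
    0 ≤ ∑ i, quadM1 σ R (z i) (∑ j, Lap i j • z j) := by
  simp only [quadM1_eq (isHermitian_iff_isSymm.1 hR.isHermitian), sum_sub_distrib, ← mul_sum]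
  linarith [sum_dotProduct_mulVec_sub_sum_smul_le hR hL z hz]

end QuadraticConstraints

section FixedPoint

variable {X W Y : Type*} [Fintype X]
  {A : Matrix X X ℝ} {Bu : X → ℝ} {Cy : X → ℝ} {Dyu : ℝ} {Cz : Matrix W X ℝ} {Dzu : W → ℝ}
  {Fx : Matrix Y X ℝ} {Fu : Y → ℝ} {p q : X → ℝ}

lemma equilibrium_smul_sub_smul (hAp : A *ᵥ p - p = 0) (hFp : Fx *ᵥ p = 0)
    (hAq : A *ᵥ q - q = Bu) (hCyq : Cy ⬝ᵥ q = Dyu) (hCzq : Cz *ᵥ q = Dzu) (α w : ℝ) :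
    A *ᵥ (α • p - w • q) + w • Bu = α • p - w • q ∧
      Cy ⬝ᵥ (α • p - w • q) + Dyu * w = α * (Cy ⬝ᵥ p) ∧
      Cz *ᵥ (α • p - w • q) + w • Dzu = α • Cz *ᵥ p ∧
      Fx *ᵥ (α • p - w • q) + w • Fu = w • (Fu - Fx *ᵥ q) := by
  refine ⟨?_, ?_, ?_, ?_⟩
  · rw [mulVec_sub, mulVec_smul, mulVec_smul, sub_eq_zero.1 hAp, ← hAq]
    module
  · rw [dotProduct_sub, dotProduct_smul, dotProduct_smul, hCyq, smul_eq_mul, smul_eq_mul]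
    ring
  · rw [mulVec_sub, mulVec_smul, mulVec_smul, hCzq]
    module
  · rw [mulVec_sub, mulVec_smul, mulVec_smul, hFp]
    module

end FixedPoint

section Lyapunov

variable {ι X : Type*} [Fintype ι] [Fintype X]

noncomputable def lyapunov (P Q : Matrix X X ℝ) (x : ι → X → ℝ) : ℝ :=
  Fintype.card ι * ((𝔼 i, x i) ⬝ᵥ P *ᵥ 𝔼 i, x i)
    + ∑ i, (x i - 𝔼 j, x j) ⬝ᵥ Q *ᵥ (x i - 𝔼 j, x j)

lemma exists_pos_mul_dotProduct_self_le_lyapunov [DecidableEq X] {P Q : Matrix X X ℝ}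
    (hP : P.PosDef) (hQ : Q.PosDef) :
    ∃ ε > 0, ∀ (x : ι → X → ℝ) (i : ι), ε * (x i ⬝ᵥ x i) ≤ lyapunov P Q x := by
  obtain ⟨εP, hεP, hPle⟩ := hP.exists_pos_mul_dotProduct_self_le
  obtain ⟨εQ, hεQ, hQle⟩ := hQ.exists_pos_mul_dotProduct_self_le
  set ε := min εP εQ
  refine ⟨ε / 2, by positivity, fun x i => ?_⟩
  set xb := 𝔼 j, x j
  have hnonneg : ∀ w : X → ℝ, 0 ≤ w ⬝ᵥ w := fun w => by
    simpa using dotProduct_star_self_nonneg w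
  have hcard : (1 : ℝ) ≤ Fintype.card ι := by exact_mod_cast Fintype.card_pos_iff.2 ⟨i⟩
  have hmean : ε * (xb ⬝ᵥ xb) ≤ Fintype.card ι * (xb ⬝ᵥ P *ᵥ xb) :=
    calc ε * (xb ⬝ᵥ xb) ≤ εP * (xb ⬝ᵥ xb) := by gcongr; exacts [hnonneg xb, min_le_left _ _]
      _ ≤ xb ⬝ᵥ P *ᵥ xb := hPle xb
      _ ≤ Fintype.card ι * (xb ⬝ᵥ P *ᵥ xb) :=
        le_mul_of_one_le_left (by simpa using hP.posSemidef.dotProduct_mulVec_nonneg xb) hcard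
  have hdev : ε * ((x i - xb) ⬝ᵥ (x i - xb)) ≤ ∑ j, (x j - xb) ⬝ᵥ Q *ᵥ (x j - xb) :=
    calc ε * ((x i - xb) ⬝ᵥ (x i - xb)) ≤ εQ * ((x i - xb) ⬝ᵥ (x i - xb)) := by
          gcongr; exacts [hnonneg _, min_le_right _ _]
      _ ≤ (x i - xb) ⬝ᵥ Q *ᵥ (x i - xb) := hQle _
      _ ≤ ∑ j, (x j - xb) ⬝ᵥ Q *ᵥ (x j - xb) :=
        single_le_sum (f := fun j => (x j - xb) ⬝ᵥ Q *ᵥ (x j - xb))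
          (fun j _ => by simpa using hQ.posSemidef.dotProduct_mulVec_nonneg (x j - xb))
          (mem_univ i)
  have hsplit := dotProduct_add_self_le xb (x i - xb)
  rw [add_sub_cancel] at hsplit
  have := mul_le_mul_of_nonneg_left hsplit (by positivity : (0 : ℝ) ≤ ε / 2)
  unfold lyapunov
  linarith

end Lyapunov

lemma exists_pos_le_mul_pow {α : Type*} {e : α → ℕ → ℝ} {V : ℕ → ℝ} {ε ρ : ℝ} (hε : 0 < ε)
    (hρ : 0 ≤ ρ) (he : ∀ a k, ε * e a k ^ 2 ≤ V k) (hV : ∀ k, V (k + 1) ≤ ρ ^ 2 * V k) :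
    ∃ C > 0, ∀ a k, e a k ≤ C * ρ ^ k := by
  refine ⟨√(V 0 / ε) + 1, by positivity, fun a k => ?_⟩
  have hVk : V k ≤ (ρ ^ 2) ^ k * V 0 := le_geom (sq_nonneg ρ) k fun j _ => hV j
  have hsq : e a k ^ 2 ≤ V 0 / ε * (ρ ^ k) ^ 2 := by
    rw [div_mul_eq_mul_div, le_div_iff₀ hε, ← pow_mul, mul_comm k, pow_mul]
    linarith [he a k]
  calc e a k ≤ √(V 0 / ε * (ρ ^ k) ^ 2) := Real.le_sqrt_of_sq_le hsq
    _ = √(V 0 / ε) * ρ ^ k := by rw [Real.sqrt_mul' _ (sq_nonneg _), Real.sqrt_sq (by positivity)]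
    _ ≤ (√(V 0 / ε) + 1) * ρ ^ k := by gcongr; linarith

section LMI

variable {X W Y : Type*} [Fintype X] [Fintype W]

/-- (LMI-1) with `Ψ` eliminated: `Ψ s` ranges over the nullspace of `[F_x F_u]`. -/
def LMI1 (A : Matrix X X ℝ) (Bu Cy : X → ℝ) (Dyu : ℝ) (Fx : Matrix Y X ℝ) (Fu : Y → ℝ)
    (P : Matrix X X ℝ) (m L ρ : ℝ) : Prop :=
  ∀ (xv : X → ℝ) (uv : ℝ), Fx *ᵥ xv + uv • Fu = 0 →
    (A *ᵥ xv + uv • Bu) ⬝ᵥ P *ᵥ (A *ᵥ xv + uv • Bu) - ρ ^ 2 * (xv ⬝ᵥ P *ᵥ xv)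
      + quadM0 m L (Cy ⬝ᵥ xv + Dyu * uv) uv ≤ 0

def LMI2 (A : Matrix X X ℝ) (Bu : X → ℝ) (Bv : Matrix X W ℝ) (Cy : X → ℝ) (Dyu : ℝ)
    (Dyv : W → ℝ) (Cz : Matrix W X ℝ) (Dzu : W → ℝ) (Dzv : Matrix W W ℝ) (Q : Matrix X X ℝ)
    (R : Matrix W W ℝ) (m L σ ρ : ℝ) : Prop :=
  ∀ (xv : X → ℝ) (uv : ℝ) (vv : W → ℝ),
    (A *ᵥ xv + uv • Bu + Bv *ᵥ vv) ⬝ᵥ Q *ᵥ (A *ᵥ xv + uv • Bu + Bv *ᵥ vv)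
      - ρ ^ 2 * (xv ⬝ᵥ Q *ᵥ xv)
      + quadM0 m L (Cy ⬝ᵥ xv + Dyu * uv + Dyv ⬝ᵥ vv) uv
      + (σ ^ 2 - 1) * ((Cz *ᵥ xv + uv • Dzu + Dzv *ᵥ vv) ⬝ᵥ
          R *ᵥ (Cz *ᵥ xv + uv • Dzu + Dzv *ᵥ vv))
      + 2 * ((Cz *ᵥ xv + uv • Dzu + Dzv *ᵥ vv) ⬝ᵥ R *ᵥ vv)
      - vv ⬝ᵥ R *ᵥ vv ≤ 0

end LMI

section Step

variable {ι X W Y : Type*} [Fintype ι] [Fintype X] [Fintype W]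
  {A : Matrix X X ℝ} {Bu : X → ℝ} {Bv : Matrix X W ℝ} {Cy : X → ℝ} {Dyu : ℝ} {Dyv : W → ℝ}
  {Cz : Matrix W X ℝ} {Dzu : W → ℝ} {Dzv : Matrix W W ℝ} {Fx : Matrix Y X ℝ} {Fu : Y → ℝ}
  {P Q : Matrix X X ℝ} {R : Matrix W W ℝ} {m L σ ρ : ℝ}

lemma lyapunov_mean_step_le
    (hLMI1 : LMI1 A Bu Cy Dyu Fx Fu P m L ρ)
    {x x' : ι → X → ℝ} {y u : ι → ℝ} {v : ι → W → ℝ}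
    (hx : ∀ i, x' i = A *ᵥ x i + u i • Bu + Bv *ᵥ v i)
    (hy : ∀ i, y i = Cy ⬝ᵥ x i + Dyu * u i + Dyv ⬝ᵥ v i)
    (hF : ∑ i, (Fx *ᵥ x i + u i • Fu) = 0) (hv : ∑ i, v i = 0) :
    (𝔼 i, x' i) ⬝ᵥ P *ᵥ (𝔼 i, x' i)
      ≤ ρ ^ 2 * ((𝔼 i, x i) ⬝ᵥ P *ᵥ 𝔼 i, x i) - quadM0 m L (𝔼 i, y i) (𝔼 i, u i) := by
  have hF' : Fx *ᵥ (𝔼 i, x i) + (𝔼 i, u i) • Fu = 0 := by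
    simpa only [expect_add_distrib, expect_mulVec, expect_smul_const] using
      expect_eq_zero_of_sum_eq_zero hF
  rw [expect_eq_mulVec_add_smul_add_mulVec hx, expect_eq_dotProduct_add_mul_add_dotProduct hy,
    expect_eq_zero_of_sum_eq_zero hv, mulVec_zero, dotProduct_zero, add_zero, add_zero]
  linarith [hLMI1 _ _ hF']

lemma lyapunov_deviation_step_le
    (hLMI2 : LMI2 A Bu Bv Cy Dyu Dyv Cz Dzu Dzv Q R m L σ ρ)
    {x x' : ι → X → ℝ} {y u : ι → ℝ} {z v : ι → W → ℝ}
    (hx : ∀ i, x' i = A *ᵥ x i + u i • Bu + Bv *ᵥ v i)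
    (hy : ∀ i, y i = Cy ⬝ᵥ x i + Dyu * u i + Dyv ⬝ᵥ v i)
    (hz : ∀ i, z i = Cz *ᵥ x i + u i • Dzu + Dzv *ᵥ v i) (hv : ∑ i, v i = 0) :
    ∑ i, (x' i - 𝔼 j, x' j) ⬝ᵥ Q *ᵥ (x' i - 𝔼 j, x' j)
      ≤ ρ ^ 2 * ∑ i, (x i - 𝔼 j, x j) ⬝ᵥ Q *ᵥ (x i - 𝔼 j, x j)
        - ∑ i, quadM0 m L (y i - 𝔼 j, y j) (u i - 𝔼 j, u j)
        - ∑ i, quadM1 σ R (z i - 𝔼 j, z j) (v i) := by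
  rw [mul_sum, ← sum_sub_distrib, ← sum_sub_distrib]
  refine sum_le_sum fun i _ => ?_
  have hvi : v i - 𝔼 j, v j = v i := by rw [expect_eq_zero_of_sum_eq_zero hv, sub_zero]
  have hxi := sub_expect_eq_mulVec_add_smul_add_mulVec hx i
  have hyi := sub_expect_eq_dotProduct_add_mul_add_dotProduct hy i
  have hzi := sub_expect_eq_mulVec_add_smul_add_mulVec hz i
  rw [hvi] at hxi hyi hzi
  have hLMI := hLMI2 (x i - 𝔼 j, x j) (u i - 𝔼 j, u j) (v i)
  rw [← hxi, ← hyi, ← hzi] at hLMI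
  unfold quadM1
  linarith

lemma lyapunov_step_le [DecidableEq W] {n : ℕ}
    (hLMI1 : LMI1 A Bu Cy Dyu Fx Fu P m L ρ)
    (hLMI2 : LMI2 A Bu Bv Cy Dyu Dyv Cz Dzu Dzv Q R m L σ ρ)
    (hR : R.PosSemidef) {Lap : Matrix (Fin n) (Fin n) ℝ} (hrow : ∀ i, ∑ j, Lap i j = 0)
    (hcol : ∀ j, ∑ i, Lap i j = 0)
    (hL : ∀ φ, enorm2 ((1 - projOnes n - Lap) *ᵥ φ) ≤ σ * enorm2 φ)
    {x x' : Fin n → X → ℝ} {y u : Fin n → ℝ} {z v : Fin n → W → ℝ}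
    (hx : ∀ i, x' i = A *ᵥ x i + u i • Bu + Bv *ᵥ v i)
    (hy : ∀ i, y i = Cy ⬝ᵥ x i + Dyu * u i + Dyv ⬝ᵥ v i)
    (hz : ∀ i, z i = Cz *ᵥ x i + u i • Dzu + Dzv *ᵥ v i)
    (hv : ∀ i, v i = ∑ j, Lap i j • z j) (hF : ∑ i, (Fx *ᵥ x i + u i • Fu) = 0)
    (hsec : ∀ i, 0 ≤ quadM0 m L (y i) (u i)) :
    lyapunov P Q x' ≤ ρ ^ 2 * lyapunov P Q x := by
  have hv0 : ∑ i, v i = 0 := by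
    simp only [hv]
    rw [sum_comm]
    simp only [← sum_smul, hcol, zero_smul, sum_const_zero]
  have hmean := lyapunov_mean_step_le hLMI1 hx hy hF hv0
  have hdev := lyapunov_deviation_step_le hLMI2 hx hy hz hv0
  have hsector := sum_quadM0_eq m L y u ▸ sum_nonneg fun i _ => hsec i
  have hgraph : 0 ≤ ∑ i, quadM1 σ R (z i - 𝔼 j, z j) (v i) := by
    have hvdev : ∀ i, v i = ∑ j, Lap i j • (z j - 𝔼 k, z k) := fun i => by
      simp only [hv, smul_sub, sum_sub_distrib, ← sum_smul, hrow, zero_smul, sub_zero]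
    simpa only [← hvdev] using sum_quadM1_nonneg hR hL _ (sum_sub_expect_eq_zero z)
  have hcard : (0 : ℝ) ≤ Fintype.card (Fin n) := Nat.cast_nonneg _
  unfold lyapunov
  linarith [mul_le_mul_of_nonneg_left hmean hcard]

end Step

section Convergence

variable {X W Y : Type*} [Fintype X] [Fintype W] [DecidableEq X] [DecidableEq W]
  {A : Matrix X X ℝ} {Bu : X → ℝ} {Bv : Matrix X W ℝ} {Cy : X → ℝ} {Dyu : ℝ} {Dyv : W → ℝ}
  {Cz : Matrix W X ℝ} {Dzu : W → ℝ} {Dzv : Matrix W W ℝ} {Fx : Matrix Y X ℝ} {Fu : Y → ℝ}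
  {P Q : Matrix X X ℝ} {R : Matrix W W ℝ} {m L σ ρ : ℝ}

theorem exists_enorm2_sub_le_mul_pow {n : ℕ}
    (hLMI1 : LMI1 A Bu Cy Dyu Fx Fu P m L ρ)
    (hLMI2 : LMI2 A Bu Bv Cy Dyu Dyv Cz Dzu Dzv Q R m L σ ρ)
    (hP : P.PosDef) (hQ : Q.PosDef) (hR : R.PosSemidef) (hρ : 0 ≤ ρ)
    {Lap : ℕ → Matrix (Fin n) (Fin n) ℝ} (hrow : ∀ k i, ∑ j, Lap k i j = 0)
    (hcol : ∀ k j, ∑ i, Lap k i j = 0)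
    (hL : ∀ k φ, enorm2 ((1 - projOnes n - Lap k) *ᵥ φ) ≤ σ * enorm2 φ)
    {xs : Fin n → X → ℝ} {us : Fin n → ℝ} {ys : ℝ} {zs : W → ℝ}
    (hxs : ∀ i, A *ᵥ xs i + us i • Bu = xs i) (hys : ∀ i, Cy ⬝ᵥ xs i + Dyu * us i = ys)
    (hzs : ∀ i, Cz *ᵥ xs i + us i • Dzu = zs) (hFs : ∑ i, (Fx *ᵥ xs i + us i • Fu) = 0)
    {x : ℕ → Fin n → X → ℝ} {y u : ℕ → Fin n → ℝ} {z v : ℕ → Fin n → W → ℝ}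
    (hx : ∀ k i, x (k + 1) i = A *ᵥ x k i + u k i • Bu + Bv *ᵥ v k i)
    (hy : ∀ k i, y k i = Cy ⬝ᵥ x k i + Dyu * u k i + Dyv ⬝ᵥ v k i)
    (hz : ∀ k i, z k i = Cz *ᵥ x k i + u k i • Dzu + Dzv *ᵥ v k i)
    (hv : ∀ k i, v k i = ∑ j, Lap k i j • z k j)
    (hF : ∀ k, ∑ j, (Fx *ᵥ x k j + u k j • Fu) = 0)
    (hsec : ∀ k i, 0 ≤ quadM0 m L (y k i - ys) (u k i - us i)) :
    ∃ C > 0, ∀ i k, enorm2 (x k i - xs i) ≤ C * ρ ^ k := by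
  obtain ⟨ε, hε, hV⟩ := exists_pos_mul_dotProduct_self_le_lyapunov (ι := Fin n) hP hQ
  refine exists_pos_le_mul_pow hε hρ (V := fun k => lyapunov P Q fun i => x k i - xs i)
    (fun i k => by rw [enorm2_sq]; exact hV (fun i => x k i - xs i) i) fun k => ?_
  refine lyapunov_step_le (z := fun i => z k i - zs) (v := v k) hLMI1 hLMI2 hR (hrow k) (hcol k)
    (hL k) (fun i => ?_) (fun i => ?_) (fun i => ?_) (fun i => ?_) ?_ (hsec k)
  · conv_lhs => rw [hx, ← hxs i]
    rw [mulVec_sub, sub_smul]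
    abel
  · rw [hy, ← hys i, dotProduct_sub]
    ring
  · rw [hz, ← hzs i, mulVec_sub, sub_smul]
    abel
  · simp only [hv, smul_sub, sum_sub_distrib, ← sum_smul, hrow, zero_smul, sub_zero]
  · calc ∑ i, (Fx *ᵥ (x k i - xs i) + (u k i - us i) • Fu)
        = ∑ i, (Fx *ᵥ x k i + u k i • Fu) - ∑ i, (Fx *ᵥ xs i + us i • Fu) := by
          rw [← sum_sub_distrib]
          exact sum_congr rfl fun i _ => by rw [mulVec_sub, sub_smul]; abel
      _ = 0 := by rw [hF k, hFs, sub_zero]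

end Convergence

theorem stmt_2_general
    (ν c r n sdim : ℕ) (m L σ ρ : ℝ)
    (hρ : 0 ≤ ρ)
    (A : Matrix (Fin ν) (Fin ν) ℝ) (Bu : Fin ν → ℝ) (Bv : Matrix (Fin ν) (Fin c) ℝ)
    (Cy : Fin ν → ℝ) (Dyu : ℝ) (Dyv : Fin c → ℝ)
    (Cz : Matrix (Fin c) (Fin ν) ℝ) (Dzu : Fin c → ℝ) (Dzv : Matrix (Fin c) (Fin c) ℝ)
    (Fx : Matrix (Fin r) (Fin ν) ℝ) (Fu : Fin r → ℝ)
    -- fixed-point conditions (i) and (ii)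
    (hfp1 : ∃ p : Fin ν → ℝ, A.mulVec p - p = 0 ∧ Fx.mulVec p = 0 ∧ Cy ⬝ᵥ p ≠ 0)
    (hfp2 : ∃ q : Fin ν → ℝ, A.mulVec q - q = Bu ∧ Cy ⬝ᵥ q = Dyu ∧ Cz.mulVec q = Dzu)
    -- gradient maps: sector bound with parameters (m, L) and optimizer yopt
    (g : Fin n → ℝ → ℝ) (yopt : ℝ)
    (hsec : ∀ i y, (g i y - g i yopt - m * (y - yopt)) *
      (g i y - g i yopt - L * (y - yopt)) ≤ 0)
    (hopt : ∑ i, g i yopt = 0)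
    -- graph assumptions with parameter σ
    (Lap : ℕ → Matrix (Fin n) (Fin n) ℝ)
    (hL1 : ∀ k, (Lap k).mulVec (fun _ => (1 : ℝ)) = 0)
    (hL2 : ∀ k, Matrix.vecMul (fun _ => (1 : ℝ)) (Lap k) = 0)
    (hL4 : ∀ k (φ : Fin n → ℝ),
      enorm2 ((1 - projOnes n - Lap k).mulVec φ) ≤ σ * enorm2 φ)
    -- Ψ: columns form a basis of the nullspace of [Fx Fu]
    (Ψx : Matrix (Fin ν) (Fin sdim) ℝ) (Ψu : Fin sdim → ℝ)
    (hΨ2 : ∀ (xv : Fin ν → ℝ) (uv : ℝ), Fx.mulVec xv + uv • Fu = 0 →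
      ∃ s : Fin sdim → ℝ, Ψx.mulVec s = xv ∧ Ψu ⬝ᵥ s = uv)
    -- SDP solution
    (P Q : Matrix (Fin ν) (Fin ν) ℝ) (R : Matrix (Fin c) (Fin c) ℝ)
    (hP : P.PosDef) (hQ : Q.PosDef) (hR : R.PosSemidef)
    -- (LMI-1): Ψᵀ N₁ᵀ blockdiag(P, −ρ²P, M₀) N₁ Ψ ⪯ 0, as a quadratic form
    (hLMI1 : ∀ s : Fin sdim → ℝ,
      (A.mulVec (Ψx.mulVec s) + (Ψu ⬝ᵥ s) • Bu) ⬝ᵥ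
          P.mulVec (A.mulVec (Ψx.mulVec s) + (Ψu ⬝ᵥ s) • Bu)
        - ρ^2 * ((Ψx.mulVec s) ⬝ᵥ P.mulVec (Ψx.mulVec s))
        + quadM0 m L (Cy ⬝ᵥ (Ψx.mulVec s) + Dyu * (Ψu ⬝ᵥ s)) (Ψu ⬝ᵥ s) ≤ 0)
    -- (LMI-2): N₂ᵀ blockdiag(Q, −ρ²Q, M₀, M₁⊗R) N₂ ⪯ 0, as a quadratic form
    (hLMI2 : ∀ (xv : Fin ν → ℝ) (uv : ℝ) (vv : Fin c → ℝ),
      (A.mulVec xv + uv • Bu + Bv.mulVec vv) ⬝ᵥ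
          Q.mulVec (A.mulVec xv + uv • Bu + Bv.mulVec vv)
        - ρ^2 * (xv ⬝ᵥ Q.mulVec xv)
        + quadM0 m L (Cy ⬝ᵥ xv + Dyu * uv + Dyv ⬝ᵥ vv) uv
        + (σ^2 - 1) * ((Cz.mulVec xv + uv • Dzu + Dzv.mulVec vv) ⬝ᵥ
            R.mulVec (Cz.mulVec xv + uv • Dzu + Dzv.mulVec vv))
        + 2 * ((Cz.mulVec xv + uv • Dzu + Dzv.mulVec vv) ⬝ᵥ R.mulVec vv)
        - vv ⬝ᵥ R.mulVec vv ≤ 0)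
    -- trajectory of the algorithm
    (x : ℕ → Fin n → Fin ν → ℝ) (y u : ℕ → Fin n → ℝ) (z v : ℕ → Fin n → Fin c → ℝ)
    (htraj1 : ∀ k i, x (k+1) i = A.mulVec (x k i) + u k i • Bu + Bv.mulVec (v k i))
    (htraj2 : ∀ k i, y k i = Cy ⬝ᵥ x k i + Dyu * u k i + Dyv ⬝ᵥ v k i)
    (htraj3 : ∀ k i, z k i = Cz.mulVec (x k i) + u k i • Dzu + Dzv.mulVec (v k i))
    (htraj4 : ∀ k i, u k i = g i (y k i))
    (htraj5 : ∀ k i, v k i = ∑ j, Lap k i j • z k j)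
    (htraj6 : ∀ k, ∑ j, (Fx.mulVec (x k j) + u k j • Fu) = 0) :
    ∃ (xstar : Fin n → Fin ν → ℝ) (ystar ustar : Fin n → ℝ)
      (zstar vstar : Fin n → Fin c → ℝ),
      -- fixed-point equations with constant iterates
      (∀ i, xstar i = A.mulVec (xstar i) + ustar i • Bu + Bv.mulVec (vstar i)) ∧
      (∀ i, ystar i = Cy ⬝ᵥ xstar i + Dyu * ustar i + Dyv ⬝ᵥ vstar i) ∧
      (∀ i, zstar i = Cz.mulVec (xstar i) + ustar i • Dzu + Dzv.mulVec (vstar i)) ∧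
      (∀ i, ustar i = g i (ystar i)) ∧
      (∀ k i, vstar i = ∑ j, Lap k i j • zstar j) ∧
      (∑ j, (Fx.mulVec (xstar j) + ustar j • Fu)) = 0 ∧
      -- fixed-point conditions (consensus, optimality, robustness)
      (∀ i j, ystar i = ystar j) ∧ (∑ i, ustar i = 0) ∧
      (∀ i j, zstar i = zstar j) ∧ (∀ i, vstar i = 0) ∧
      (∀ i, ystar i = yopt) ∧
      -- linear convergence with rate ρ
      ∃ C : ℝ, 0 < C ∧ ∀ i k, enorm2 (x k i - xstar i) ≤ C * ρ ^ k := by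
  obtain ⟨p, hAp, hFp, hCp⟩ := hfp1
  obtain ⟨q, hAq, hCyq, hCzq⟩ := hfp2
  have hrow : ∀ k i, ∑ j, Lap k i j = 0 := fun k i => by
    simpa [mulVec, dotProduct] using congrFun (hL1 k) i
  have hcol : ∀ k j, ∑ i, Lap k i j = 0 := fun k j => by
    simpa [vecMul, dotProduct] using congrFun (hL2 k) j
  set α := yopt / (Cy ⬝ᵥ p)
  have hfix := fun i => equilibrium_smul_sub_smul (Fu := Fu) hAp hFp hAq hCyq hCzq α (g i yopt)
  have hys : ∀ i, Cy ⬝ᵥ (α • p - g i yopt • q) + Dyu * g i yopt = yopt := fun i =>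
    (hfix i).2.1.trans (div_mul_cancel₀ _ hCp)
  have hFs : ∑ i, (Fx *ᵥ (α • p - g i yopt • q) + g i yopt • Fu) = 0 := by
    rw [sum_congr rfl fun i _ => (hfix i).2.2.2, ← sum_smul, hopt, zero_smul]
  refine ⟨fun i => α • p - g i yopt • q, fun _ => yopt, fun i => g i yopt, fun _ => α • Cz *ᵥ p,
    fun _ => 0, fun i => by simpa using (hfix i).1.symm, fun i => by simpa using (hys i).symm,
    fun i => by simpa using (hfix i).2.2.1.symm, fun _ => rfl,
    fun k i => by rw [← sum_smul, hrow, zero_smul], hFs, fun _ _ => rfl, hopt, fun _ _ => rfl,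
    fun _ => rfl, fun _ => rfl, ?_⟩
  exact exists_enorm2_sub_le_mul_pow
    (fun xv uv h => by obtain ⟨s, rfl, rfl⟩ := hΨ2 xv uv h; exact hLMI1 s) hLMI2 hP hQ hR hρ
    hrow hcol hL4 (fun i => (hfix i).1) hys (fun i => (hfix i).2.2.1) hFs
    htraj1 htraj2 htraj3 htraj5 htraj6
    fun k i => quadM0_nonneg_of_sector (by rw [htraj4]; exact hsec i (y k i))

/-- Main analysis result (Theorem 1): feasibility of the SDP certifies linear
convergence with rate `ρ` to a fixed point satisfying the fixed-point conditions. -/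
theorem stmt_2
    (ν c r n sdim : ℕ) (m L σ ρ : ℝ)
    (hm : 0 < m) (hmL : m ≤ L) (hσ0 : 0 ≤ σ) (hσ1 : σ < 1) (hρ : 0 ≤ ρ)
    (A : Matrix (Fin ν) (Fin ν) ℝ) (Bu : Fin ν → ℝ) (Bv : Matrix (Fin ν) (Fin c) ℝ)
    (Cy : Fin ν → ℝ) (Dyu : ℝ) (Dyv : Fin c → ℝ)
    (Cz : Matrix (Fin c) (Fin ν) ℝ) (Dzu : Fin c → ℝ) (Dzv : Matrix (Fin c) (Fin c) ℝ)
    (Fx : Matrix (Fin r) (Fin ν) ℝ) (Fu : Fin r → ℝ)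
    -- fixed-point conditions (i) and (ii)
    (hfp1 : ∃ p : Fin ν → ℝ, A.mulVec p - p = 0 ∧ Fx.mulVec p = 0 ∧ Cy ⬝ᵥ p ≠ 0)
    (hfp2 : ∃ q : Fin ν → ℝ, A.mulVec q - q = Bu ∧ Cy ⬝ᵥ q = Dyu ∧ Cz.mulVec q = Dzu)
    -- gradient maps: sector bound with parameters (m, L) and optimizer yopt
    (g : Fin n → ℝ → ℝ) (yopt : ℝ)
    (hsec : ∀ i y, (g i y - g i yopt - m * (y - yopt)) *
      (g i y - g i yopt - L * (y - yopt)) ≤ 0)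
    (hopt : ∑ i, g i yopt = 0)
    -- graph assumptions with parameter σ
    (Lap : ℕ → Matrix (Fin n) (Fin n) ℝ)
    (hL1 : ∀ k, (Lap k).mulVec (fun _ => (1 : ℝ)) = 0)
    (hL2 : ∀ k, Matrix.vecMul (fun _ => (1 : ℝ)) (Lap k) = 0)
    (hL3 : ∀ k (xv : Fin n → ℝ), (Lap k).mulVec xv = 0 → ∃ ch : ℝ, xv = fun _ => ch)
    (hL4 : ∀ k (φ : Fin n → ℝ),
      enorm2 ((1 - projOnes n - Lap k).mulVec φ) ≤ σ * enorm2 φ)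
    -- Ψ: columns form a basis of the nullspace of [Fx Fu]
    (Ψx : Matrix (Fin ν) (Fin sdim) ℝ) (Ψu : Fin sdim → ℝ)
    (hΨ1 : ∀ s : Fin sdim → ℝ, Fx.mulVec (Ψx.mulVec s) + (Ψu ⬝ᵥ s) • Fu = 0)
    (hΨ2 : ∀ (xv : Fin ν → ℝ) (uv : ℝ), Fx.mulVec xv + uv • Fu = 0 →
      ∃ s : Fin sdim → ℝ, Ψx.mulVec s = xv ∧ Ψu ⬝ᵥ s = uv)
    (hΨ3 : ∀ s : Fin sdim → ℝ, Ψx.mulVec s = 0 → Ψu ⬝ᵥ s = 0 → s = 0)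
    -- SDP solution
    (P Q : Matrix (Fin ν) (Fin ν) ℝ) (R : Matrix (Fin c) (Fin c) ℝ)
    (hP : P.PosDef) (hQ : Q.PosDef) (hR : R.PosSemidef)
    -- (LMI-1): Ψᵀ N₁ᵀ blockdiag(P, −ρ²P, M₀) N₁ Ψ ⪯ 0, as a quadratic form
    (hLMI1 : ∀ s : Fin sdim → ℝ,
      (A.mulVec (Ψx.mulVec s) + (Ψu ⬝ᵥ s) • Bu) ⬝ᵥ
          P.mulVec (A.mulVec (Ψx.mulVec s) + (Ψu ⬝ᵥ s) • Bu)
        - ρ^2 * ((Ψx.mulVec s) ⬝ᵥ P.mulVec (Ψx.mulVec s))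
        + quadM0 m L (Cy ⬝ᵥ (Ψx.mulVec s) + Dyu * (Ψu ⬝ᵥ s)) (Ψu ⬝ᵥ s) ≤ 0)
    -- (LMI-2): N₂ᵀ blockdiag(Q, −ρ²Q, M₀, M₁⊗R) N₂ ⪯ 0, as a quadratic form
    (hLMI2 : ∀ (xv : Fin ν → ℝ) (uv : ℝ) (vv : Fin c → ℝ),
      (A.mulVec xv + uv • Bu + Bv.mulVec vv) ⬝ᵥ
          Q.mulVec (A.mulVec xv + uv • Bu + Bv.mulVec vv)
        - ρ^2 * (xv ⬝ᵥ Q.mulVec xv)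
        + quadM0 m L (Cy ⬝ᵥ xv + Dyu * uv + Dyv ⬝ᵥ vv) uv
        + (σ^2 - 1) * ((Cz.mulVec xv + uv • Dzu + Dzv.mulVec vv) ⬝ᵥ
            R.mulVec (Cz.mulVec xv + uv • Dzu + Dzv.mulVec vv))
        + 2 * ((Cz.mulVec xv + uv • Dzu + Dzv.mulVec vv) ⬝ᵥ R.mulVec vv)
        - vv ⬝ᵥ R.mulVec vv ≤ 0)
    -- trajectory of the algorithm
    (x : ℕ → Fin n → Fin ν → ℝ) (y u : ℕ → Fin n → ℝ) (z v : ℕ → Fin n → Fin c → ℝ)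
    (htraj1 : ∀ k i, x (k+1) i = A.mulVec (x k i) + u k i • Bu + Bv.mulVec (v k i))
    (htraj2 : ∀ k i, y k i = Cy ⬝ᵥ x k i + Dyu * u k i + Dyv ⬝ᵥ v k i)
    (htraj3 : ∀ k i, z k i = Cz.mulVec (x k i) + u k i • Dzu + Dzv.mulVec (v k i))
    (htraj4 : ∀ k i, u k i = g i (y k i))
    (htraj5 : ∀ k i, v k i = ∑ j, Lap k i j • z k j)
    (htraj6 : ∀ k, ∑ j, (Fx.mulVec (x k j) + u k j • Fu) = 0) :
    ∃ (xstar : Fin n → Fin ν → ℝ) (ystar ustar : Fin n → ℝ)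
      (zstar vstar : Fin n → Fin c → ℝ),
      -- fixed-point equations with constant iterates
      (∀ i, xstar i = A.mulVec (xstar i) + ustar i • Bu + Bv.mulVec (vstar i)) ∧
      (∀ i, ystar i = Cy ⬝ᵥ xstar i + Dyu * ustar i + Dyv ⬝ᵥ vstar i) ∧
      (∀ i, zstar i = Cz.mulVec (xstar i) + ustar i • Dzu + Dzv.mulVec (vstar i)) ∧
      (∀ i, ustar i = g i (ystar i)) ∧
      (∀ k i, vstar i = ∑ j, Lap k i j • zstar j) ∧
      (∑ j, (Fx.mulVec (xstar j) + ustar j • Fu)) = 0 ∧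
      -- fixed-point conditions (consensus, optimality, robustness)
      (∀ i j, ystar i = ystar j) ∧ (∑ i, ustar i = 0) ∧
      (∀ i j, zstar i = zstar j) ∧ (∀ i, vstar i = 0) ∧
      (∀ i, ystar i = yopt) ∧
      -- linear convergence with rate ρ
      ∃ C : ℝ, 0 < C ∧ ∀ i k, enorm2 (x k i - xstar i) ≤ C * ρ ^ k :=
  stmt_2_general ν c r n sdim m L σ ρ hρ A Bu Bv Cy Dyu Dyv Cz Dzu Dzv Fx Fu hfp1 hfp2 g yopt hsec
    hopt Lap hL1 hL2 hL4 Ψx Ψu hΨ2 P Q R hP hQ hR hLMI1 hLMI2 x y u z v htraj1 htraj2 htraj3 htraj4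
    htraj5 htraj6
end

section
/- Let 0 < m < L and (L−m)/(L+m) ≤ ρ < 1. Set α := (1−ρ)/m and P₁₁ := m(L−m)/(ρ(1−ρ)). Then the 2×2 symmetric matrix P₁₁·[[1−ρ², −α],[−α, α²]] + M₀ is negative semidefinite, where M₀ := [[−2mL, L+m],[L+m, −2]]. -/
/-! The matrix is a rank-one matrix `-c • v vᵀ` with `v = (m, -1)` and
`c = (ρ(L + m) - (L - m)) / (mρ)`, and the hypothesis on `ρ` says exactly that `c ≥ 0`. -/

open Matrix

lemma Matrix.PosSemidef.smul_vecMulVec_self {n : Type*} [Fintype n] {c : ℝ} (hc : 0 ≤ c)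
    (v : n → ℝ) : (c • vecMulVec v v).PosSemidef :=
  (posSemidef_vecMulVec_self_star v).smul hc

lemma neg_matrix_eq_smul_vecMulVec {m L ρ : ℝ} (hm : m ≠ 0) (hρ₀ : ρ ≠ 0) (hρ₁ : ρ ≠ 1) :
    -((m * (L - m) / (ρ * (1 - ρ))) •
        !![1 - ρ^2, -((1 - ρ)/m); -((1 - ρ)/m), ((1 - ρ)/m)^2] +
      !![-(2*m*L), L+m; L+m, -2]) =
      ((ρ * (L + m) - (L - m)) / (m * ρ)) • vecMulVec ![m, -1] ![m, -1] := by
  have h1ρ : 1 - ρ ≠ 0 := sub_ne_zero.mpr hρ₁.symm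
  ext i j
  fin_cases i <;> fin_cases j <;>
    · simp only [Matrix.neg_apply, Matrix.add_apply, Matrix.smul_apply, of_apply, cons_val',
        Fin.zero_eta, Fin.mk_one, cons_val_zero, cons_val_one, cons_val_fin_one, vecMulVec_apply,
        smul_eq_mul]
      field_simp
      ring

/-- With `α = (1−ρ)/m` and `P₁₁ = m(L−m)/(ρ(1−ρ))`, the matrix
`P₁₁ [[1−ρ², −α],[−α, α²]] + M₀` is negative semidefinite. -/
theorem stmt_12 (m L ρ : ℝ) (hm : 0 < m) (hmL : m < L)
    (hρ1 : (L - m) / (L + m) ≤ ρ) (hρ2 : ρ < 1) :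
    (-((m * (L - m) / (ρ * (1 - ρ))) •
        !![1 - ρ^2, -((1 - ρ)/m); -((1 - ρ)/m), ((1 - ρ)/m)^2] +
      !![-(2*m*L), L+m; L+m, -2])).PosSemidef := by
  have hLm : 0 < L + m := by linarith
  have hρ0 : 0 < ρ := (div_pos (by linarith) hLm).trans_le hρ1
  have hc : 0 ≤ (ρ * (L + m) - (L - m)) / (m * ρ) :=
    div_nonneg (sub_nonneg.mpr ((div_le_iff₀ hLm).mp hρ1)) (mul_pos hm hρ0).le
  rw [neg_matrix_eq_smul_vecMulVec hm.ne' hρ0.ne' hρ2.ne]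
  exact .smul_vecMulVec_self hc _
end

section
/- Let 0 < m < L, κ := L/m, ρ ∈ [(L−m)/(L+m), 1), β ∈ ℝ, and set η := 1+ρ−κ(1−ρ). Define t₁ := 2(1−β)−η, t₂ := β−1+ρ², t₃ := β(η+2ρ²)−η(1−ρ²), t₄ := 2βρ²−η(1−ρ²), t₅ := (1−β−ρ)(β(η+2ρ²)−(1−ρ²)(1−κ+2κρ)). Then the four conditions t₃ > 0, t₁/t₄ > 0, t₅/t₂ ≥ 0, and t₂·t₄ > 0 all hold if and only if (2β − (1−ρ)(κ+1))·(β − 1 + ρ²) < 0. -/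
/-!
With `η = 1 + ρ - κ(1 - ρ)`, the hypothesis on `ρ` is exactly `0 ≤ η`, while `κ > 1` gives
`η < 2ρ`. The right-hand side is `-t₁t₂`, and the other quantities are combinations of `t₁`, `t₂`:
`t₄ = 2t₂ + (1 - ρ²)t₁`, `t₅ = (β - (1 - ρ))(ρ(1 + ρ)t₁ + (2ρ - η)t₂)` and
`t₃ = (β - (1 - ρ))(η + 2ρ²) + ρ(1 - ρ)(2ρ - η)`, all coefficients being nonnegative.
So once `t₁` and `t₂` have the same sign, so do `t₄` and `t₅`; and then `β` lies strictly
between `1 - ρ²` and `1 - η/2`, both larger than `1 - ρ`, which makes `t₃` positive.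
-/

section SignLemmas

variable {α : Type*} [Field α] [LinearOrder α] [IsStrictOrderedRing α] {a b c p q : α}

theorem div_pos_iff_mul_pos : 0 < a / b ↔ 0 < a * b :=
  div_pos_iff.trans mul_pos_iff.symm

theorem mul_pos_of_div_pos_of_mul_pos (hab : 0 < a / b) (hcb : 0 < c * b) : 0 < a * c := by
  have hb : b ≠ 0 := right_ne_zero_of_mul hcb.ne'
  have h := mul_pos hab hcb
  rwa [show a / b * (c * b) = a * c by field_simp] at h

theorem mul_add_mul_pos_of_mul_pos (hab : 0 < a * b) (hp : 0 ≤ p) (hq : 0 < q) :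
    0 < b * (p * a + q * b) := by
  have hb : 0 < b * b := mul_self_pos.mpr (right_ne_zero_of_mul hab.ne')
  have hba : 0 ≤ p * (b * a) := mul_nonneg hp (mul_comm a b ▸ hab.le)
  linear_combination hba + q * hb

end SignLemmas

theorem eta_nonneg_and_lt_two_mul {m L ρ κ η : ℝ} (hm : 0 < m) (hmL : m < L)
    (hρ : (L - m) / (L + m) ≤ ρ) (hρ1 : ρ < 1) (hκ : κ = L / m)
    (hη : η = 1 + ρ - κ * (1 - ρ)) : 0 ≤ η ∧ η < 2 * ρ := by
  have hκ1 : 1 < κ := hκ ▸ (one_lt_div hm).mpr hmL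
  rw [show (L - m) / (L + m) = (κ - 1) / (κ + 1) by rw [hκ]; field_simp,
    div_le_iff₀ (by linarith)] at hρ
  constructor <;> nlinarith

theorem one_sub_lt_of_mul_pos {ρ η β : ℝ} (hρ0 : 0 < ρ) (hρ1 : ρ < 1) (hη : η < 2 * ρ)
    (h : 0 < (2 * (1 - β) - η) * (β - 1 + ρ ^ 2)) : 1 - ρ < β := by
  rcases mul_pos_iff.mp h with ⟨-, h₂⟩ | ⟨h₁, -⟩ <;> nlinarith

/-- The positivity conditions `t₃ > 0`, `t₁/t₄ > 0`, `t₅/t₂ ≥ 0`, `t₂t₄ > 0` for the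
rank-one SDP solution hold iff `(2β − (1−ρ)(κ+1))(β − 1 + ρ²) < 0`. -/
theorem stmt_14 (m L ρ β : ℝ) (hm : 0 < m) (hmL : m < L)
    (hρ1 : (L - m) / (L + m) ≤ ρ) (hρ2 : ρ < 1)
    (κ η t₁ t₂ t₃ t₄ t₅ : ℝ)
    (hκ : κ = L / m) (hη : η = 1 + ρ - κ * (1 - ρ))
    (ht₁ : t₁ = 2*(1 - β) - η)
    (ht₂ : t₂ = β - 1 + ρ^2)
    (ht₃ : t₃ = β*(η + 2*ρ^2) - η*(1 - ρ^2))
    (ht₄ : t₄ = 2*β*ρ^2 - η*(1 - ρ^2))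
    (ht₅ : t₅ = (1 - β - ρ)*(β*(η + 2*ρ^2) - (1 - ρ^2)*(1 - κ + 2*κ*ρ))) :
    (0 < t₃ ∧ 0 < t₁ / t₄ ∧ 0 ≤ t₅ / t₂ ∧ 0 < t₂ * t₄) ↔
      (2*β - (1 - ρ)*(κ + 1)) * (β - 1 + ρ^2) < 0 := by
  obtain ⟨hη0, hη2ρ⟩ := eta_nonneg_and_lt_two_mul hm hmL hρ1 hρ2 hκ hη
  have hρ0 : 0 < ρ := by linarith
  rw [show (2*β - (1 - ρ)*(κ + 1)) * (β - 1 + ρ^2) = -(t₁ * t₂) by rw [ht₁, ht₂, hη]; ring,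
    neg_lt_zero]
  refine ⟨fun ⟨_, h₁₄, _, h₂₄⟩ => mul_pos_of_div_pos_of_mul_pos h₁₄ h₂₄, fun h₁₂ => ?_⟩
  have hβ : 0 < β - (1 - ρ) := sub_pos.2 (one_sub_lt_of_mul_pos hρ0 hρ2 hη2ρ (ht₁ ▸ ht₂ ▸ h₁₂))
  have ht₃' : t₃ = (β - (1 - ρ)) * (η + 2*ρ^2) + ρ * (1 - ρ) * (2*ρ - η) := by rw [ht₃]; ring
  have ht₄' : t₄ = 2 * t₂ + (1 - ρ^2) * t₁ := by rw [ht₄, ht₁, ht₂]; ring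
  have ht₅' : t₅ = (β - (1 - ρ)) * (ρ * (1 + ρ) * t₁ + (2*ρ - η) * t₂) := by
    rw [ht₅, ht₁, ht₂, hη]; ring
  refine ⟨?_, ?_, ?_, ?_⟩
  · rw [ht₃']
    exact add_pos_of_nonneg_of_pos (by positivity)
      (mul_pos (mul_pos hρ0 (sub_pos.2 hρ2)) (sub_pos.2 hη2ρ))
  · rw [div_pos_iff_mul_pos, ht₄']
    exact mul_add_mul_pos_of_mul_pos (mul_comm t₁ t₂ ▸ h₁₂) zero_le_two (by nlinarith)
  · refine (div_pos_iff_mul_pos.mpr ?_).le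
    rw [ht₅', mul_assoc, mul_comm _ t₂]
    exact mul_pos hβ (mul_add_mul_pos_of_mul_pos h₁₂ (by positivity) (sub_pos.2 hη2ρ))
  · rw [ht₄', add_comm]
    exact mul_add_mul_pos_of_mul_pos h₁₂ (by nlinarith) two_pos
end

section
/- (DIGing satisfies the fixed-point conditions.) For all α, μ ∈ ℝ, the DIGing algorithm matrices A := [[1, −α, 0],[0, 1, −1],[0, 0, 0]], B_u := (0, 1, 1)ᵀ, C_y := [1, −α, 0], D_{yu} := 0, C_z := [[1, 0, 0],[0, 1, 0]], D_{zu} := (0, 0)ᵀ, F_x := [0, 1, −1], F_u := 0 satisfy the fixed-point conditions (i)–(ii): (i) there exists p ∈ ℝ³ with (A−I)p = 0, F_x p = 0, and C_y p ≠ 0; (ii) there exists q ∈ ℝ³ with (A−I)q = B_u, C_y q = D_{yu}, and C_z q = D_{zu}. -/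
open Matrix

theorem stmt_17_general (α : ℝ) :
    (∃ p : Fin 3 → ℝ,
      (!![1, -α, 0; 0, 1, -1; 0, 0, 0] : Matrix (Fin 3) (Fin 3) ℝ).mulVec p - p = 0 ∧
      (![0, 1, -1] : Fin 3 → ℝ) ⬝ᵥ p = 0 ∧
      (![1, -α, 0] : Fin 3 → ℝ) ⬝ᵥ p ≠ 0) ∧
    (∃ q : Fin 3 → ℝ,
      (!![1, -α, 0; 0, 1, -1; 0, 0, 0] : Matrix (Fin 3) (Fin 3) ℝ).mulVec q - q =
        ![0, 1, 1] ∧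
      (![1, -α, 0] : Fin 3 → ℝ) ⬝ᵥ q = 0 ∧
      (!![1, 0, 0; 0, 1, 0] : Matrix (Fin 2) (Fin 3) ℝ).mulVec q = ![0, 0]) := by
  refine ⟨⟨![1, 0, 0], ?_, ?_, ?_⟩, ⟨![0, 0, -1], ?_, ?_, ?_⟩⟩ <;>
    simp [funext_iff, Fin.forall_fin_succ, vecHead, vecTail]

/-- DIGing satisfies the fixed-point conditions (i) and (ii). -/
theorem stmt_17 (α μ : ℝ) :
    (∃ p : Fin 3 → ℝ,
      (!![1, -α, 0; 0, 1, -1; 0, 0, 0] : Matrix (Fin 3) (Fin 3) ℝ).mulVec p - p = 0 ∧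
      (![0, 1, -1] : Fin 3 → ℝ) ⬝ᵥ p = 0 ∧
      (![1, -α, 0] : Fin 3 → ℝ) ⬝ᵥ p ≠ 0) ∧
    (∃ q : Fin 3 → ℝ,
      (!![1, -α, 0; 0, 1, -1; 0, 0, 0] : Matrix (Fin 3) (Fin 3) ℝ).mulVec q - q =
        ![0, 1, 1] ∧
      (![1, -α, 0] : Fin 3 → ℝ) ⬝ᵥ q = 0 ∧
      (!![1, 0, 0; 0, 1, 0] : Matrix (Fin 2) (Fin 3) ℝ).mulVec q = ![0, 0]) :=
  stmt_17_general α
end
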